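/- arXiv:2602.04767 — 2 statements merged into one kernel-verified Lean document; each statement's English description precedes it below -/
import Mathlib

section
/- For any permutation π with des(π) ≥ 1 and asc(π) ≥ is(π), there exists a subsequence of π of length is(π) + 2 with exactly one descent; that is, ls_1(π) ≥ is(π) + 2. -/
open List Finset

variable {α : Type*}

/-- The (1-based) descent set of a finite sequence, as a `Finset ℕ`. -/
def desSet [LinearOrder α] [Inhabited α] (l : List α) : Finset ℕ :=
  (Finset.Icc 1 (l.length - 1)).filter (fun i => l.getD i default < l.getD (i - 1) default)

/-- The number of descents of a finite sequence. -/
def desNum [LinearOrder α] [Inhabited α] (l : List α) : ℕ := (desSet l).card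

/-- The number of ascents of a finite sequence. -/
def ascNum [LinearOrder α] [Inhabited α] (l : List α) : ℕ :=
  ((Finset.Icc 1 (l.length - 1)).filter (fun i => l.getD (i - 1) default < l.getD i default)).card

/-- `lsd w d` : the maximum length of a subsequence of `w` with exactly `d` descents
(`0` if there is none). -/
noncomputable def lsd [LinearOrder α] [Inhabited α] (w : List α) (d : ℕ) : ℕ :=
  sSup {m | ∃ s : List α, s.Sublist w ∧ desNum s = d ∧ s.length = m}

/-- `lsD w D` : the maximum length of a subsequence of `w` whose descent set is exactly `D`
(`0` if there is none). -/
noncomputable def lsD [LinearOrder α] [Inhabited α] (w : List α) (D : Finset ℕ) : ℕ :=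
  sSup {m | ∃ s : List α, s.Sublist w ∧ desSet s = D ∧ s.length = m}

/-- The length of a longest (strictly) increasing subsequence. -/
noncomputable def lis [LinearOrder α] (w : List α) : ℕ :=
  sSup {m | ∃ s : List α, s.Sublist w ∧ s.Pairwise (· < ·) ∧ s.length = m}

/-- The length of a longest (strictly) decreasing subsequence. -/
noncomputable def lds [LinearOrder α] (w : List α) : ℕ :=
  sSup {m | ∃ s : List α, s.Sublist w ∧ s.Pairwise (· > ·) ∧ s.length = m}

/-- The one-line notation word of a permutation of `Fin n` (with values in `ℕ`). -/
def word {n : ℕ} (π : Equiv.Perm (Fin n)) : List ℕ := List.ofFn (fun i => (π i : ℕ))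

/-- The factor `w_{[a, b]}` of a word `w` (positions `a` through `b`, 1-based). -/
def factor (w : List α) (a b : ℕ) : List α := (w.drop (a - 1)).take (b - a + 1)

/-!
Fix a longest increasing subsequence of the word `w`, of length `k`, at positions
`q₀ < ⋯ < q_{k-1}`. Since nothing can be inserted into it, every entry left of `q₀` is larger
than `w[q₀]`, every entry right of `q_{k-1}` is smaller than `w[q_{k-1}]`, and every entry
strictly between `q_t` and `q_{t+1}` is smaller than `w[q_t]` or larger than `w[q_{t+1}]`.
Hence an ascent left of `q₀`, an ascent right of `q_{k-1}`, or two ascents in the same gap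
`[q_t, q_{t+1}]` can be merged with the chain into a subsequence of length `k + 2` with exactly
one descent. If there is none, the ascents lie in pairwise distinct ones of the `k - 1` inner
gaps, so there are fewer than `k`.
-/

section Descents
variable [LinearOrder α] [Inhabited α]

lemma mem_desSet {l : List α} {i : ℕ} :
    i ∈ desSet l ↔ ∃ h : i < l.length, 0 < i ∧ l[i] < l[i - 1] := by
  simp only [desSet, Finset.mem_filter, Finset.mem_Icc]
  constructor
  · rintro ⟨⟨h1, h2⟩, h3⟩
    refine ⟨by omega, h1, ?_⟩
    rwa [List.getD_eq_getElem, List.getD_eq_getElem] at h3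
  · rintro ⟨h, h1, h3⟩
    refine ⟨⟨h1, by omega⟩, ?_⟩
    rwa [List.getD_eq_getElem, List.getD_eq_getElem]

lemma desSet_append_cons_cons {u v : List α} {a b : α} (hu : (u ++ [a]).IsChain (· ≤ ·))
    (hv : (b :: v).IsChain (· ≤ ·)) (hba : b < a) :
    desSet (u ++ a :: b :: v) = {u.length + 1} := by
  rw [List.isChain_iff_getElem] at hu hv
  ext i
  rw [mem_desSet, Finset.mem_singleton]
  have := hu (i - 1)
  have := hv (i - u.length - 2)
  grind

end Descents

section Chains
variable [LinearOrder α] (w : List α)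

def IncPair (i j : Fin w.length) : Prop := i < j ∧ w[i] < w[j]

instance : Trans (IncPair w) (IncPair w) (IncPair w) :=
  ⟨fun h₁ h₂ => ⟨h₁.1.trans h₂.1, h₁.2.trans h₂.2⟩⟩

variable {w}

lemma bddAbove_lis_set :
    BddAbove {m | ∃ s : List α, s.Sublist w ∧ s.Pairwise (· < ·) ∧ s.length = m} :=
  ⟨w.length, fun _ ⟨_, hs, _, hm⟩ => hm ▸ hs.length_le⟩

lemma length_le_lis {I : List (Fin w.length)} (hI : I.IsChain (IncPair w)) :
    I.length ≤ lis w := by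
  rw [List.isChain_iff_pairwise] at hI
  exact le_csSup bddAbove_lis_set ⟨I.map (w[·]), List.map_getElem_sublist (hI.imp And.left),
    List.pairwise_map.2 (hI.imp And.right), List.length_map _⟩

variable (w) in
lemma exists_isChain_length_eq_lis :
    ∃ I : List (Fin w.length), I.IsChain (IncPair w) ∧ I.length = lis w := by
  obtain ⟨s, hs, hinc, hlen⟩ :
      lis w ∈ {m | ∃ s : List α, s.Sublist w ∧ s.Pairwise (· < ·) ∧ s.length = m} :=
    Nat.sSup_mem ⟨0, [], List.nil_sublist w, List.Pairwise.nil, rfl⟩ bddAbove_lis_set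
  obtain ⟨I, rfl, hI⟩ := List.sublist_eq_map_getElem hs
  refine ⟨I, List.isChain_iff_pairwise.2 ?_, by simpa using hlen⟩
  exact (hI.and (List.pairwise_map.1 hinc)).imp id

lemma one_le_lis (hw : w ≠ []) : 1 ≤ lis w :=
  length_le_lis (List.IsChain.singleton (⟨0, List.length_pos_iff.2 hw⟩ : Fin w.length))

lemma not_isChain_append_cons_of_length_eq_lis {P S : List (Fin w.length)}
    (hk : (P ++ S).length = lis w) (p : Fin w.length) :
    ¬ (P ++ p :: S).IsChain (IncPair w) := fun h => by
  have := length_le_lis h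
  simp only [List.length_append, List.length_cons] at this hk
  omega

lemma length_le_lsd [Inhabited α] {s : List α} (hs : s.Sublist w) :
    s.length ≤ lsd w (desNum s) :=
  le_csSup ⟨w.length, fun _ ⟨_, hs', _, hm⟩ => hm ▸ hs'.length_le⟩ ⟨s, hs, rfl, rfl⟩

lemma exists_sublist_desNum_eq_one_of_two_runs [Inhabited α] {U V : List (Fin w.length)}
    {a b : Fin w.length} (hU : (U ++ [a]).IsChain (IncPair w))
    (hV : (b :: V).IsChain (IncPair w)) (hab : a < b) (hba : w[b] < w[a]) {m : ℕ}
    (hm : U.length + V.length + 2 = m) :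
    ∃ s, s.Sublist w ∧ desNum s = 1 ∧ s.length = m := by
  have hpos : (U ++ a :: b :: V).IsChain (· < ·) :=
    List.isChain_append_cons_cons.2 ⟨hU.imp fun _ _ h => h.1, hab, hV.imp fun _ _ h => h.1⟩
  refine ⟨(U ++ a :: b :: V).map (w[·]),
    List.map_getElem_sublist (List.isChain_iff_pairwise.1 hpos), ?_, by grind⟩
  have hval {I : List (Fin w.length)} (h : I.IsChain (IncPair w)) :
      (I.map (w[·])).IsChain (· ≤ ·) :=
    (List.isChain_map _).2 (h.imp fun _ _ h => h.2.le)
  rw [desNum, List.map_append, List.map_cons, List.map_cons,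
    desSet_append_cons_cons (by simpa using hval hU) (by simpa using hval hV) hba,
    Finset.card_singleton]

end Chains

section MaximalChain
variable [LinearOrder α] {w : List α}

lemma getElem_lt_or_gt_of_ne (hw : w.Nodup) {i j : Fin w.length} (hij : i ≠ j) :
    w[i] < w[j] ∨ w[j] < w[i] :=
  lt_or_gt_of_ne fun h => hij (Fin.ext (hw.getElem_inj_iff.1 h))

variable {P S : List (Fin w.length)} {x y p : Fin w.length}

lemma lt_getElem_of_lt_head (hw : w.Nodup) (hq : (y :: S).IsChain (IncPair w))
    (hk : (y :: S).length = lis w) (hp : p < y) : w[y] < w[p] :=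
  (getElem_lt_or_gt_of_ne hw hp.ne).resolve_left fun h =>
    not_isChain_append_cons_of_length_eq_lis (P := []) hk p (.cons_cons ⟨hp, h⟩ hq)

lemma getElem_lt_of_getLast_lt (hw : w.Nodup) (hq : (P ++ [x]).IsChain (IncPair w))
    (hk : (P ++ [x]).length = lis w) (hp : x < p) : w[p] < w[x] :=
  (getElem_lt_or_gt_of_ne hw hp.ne).resolve_left fun h =>
    not_isChain_append_cons_of_length_eq_lis (P := P ++ [x]) (S := []) (by simpa using hk) p <|
      by
      rw [List.append_assoc]
      exact List.isChain_split.2 ⟨hq, .cons_cons ⟨hp, h⟩ (.singleton _)⟩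

lemma getElem_lt_or_gt_of_mem_gap (hw : w.Nodup) (hq : (P ++ x :: y :: S).IsChain (IncPair w))
    (hk : (P ++ x :: y :: S).length = lis w) (hxp : x < p) (hpy : p < y) :
    w[p] < w[x] ∨ w[y] < w[p] := by
  obtain ⟨hPx, -, hyS⟩ := List.isChain_append_cons_cons.1 hq
  refine (getElem_lt_or_gt_of_ne hw hxp.ne').imp_right fun hxp' =>
    (getElem_lt_or_gt_of_ne hw hpy.ne).resolve_left fun hpy' => ?_
  refine not_isChain_append_cons_of_length_eq_lis (P := P ++ [x]) (S := y :: S)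
    (by simpa using hk) p ?_
  rw [List.append_assoc]
  exact List.isChain_append_cons_cons.2 ⟨hPx, ⟨hxp, hxp'⟩, .cons_cons ⟨hpy, hpy'⟩ hyS⟩

end MaximalChain

section Witnesses
variable [LinearOrder α] [Inhabited α] {w : List α} {P S : List (Fin w.length)}
  {x y c c' d d' : Fin w.length}

lemma exists_sublist_desNum_eq_one_of_incPair_le_head (hw : w.Nodup)
    (hq : (y :: S).IsChain (IncPair w)) (hk : (y :: S).length = lis w) (hc : IncPair w c c')
    (hc'y : c' ≤ y) : ∃ s, s.Sublist w ∧ desNum s = 1 ∧ s.length = lis w + 2 := by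
  have hyc : w[y] < w[c] := lt_getElem_of_lt_head hw hq hk (hc.1.trans_le hc'y)
  have hc'y : c' < y := hc'y.lt_of_ne <| by rintro rfl; exact hyc.not_gt hc.2
  exact exists_sublist_desNum_eq_one_of_two_runs (U := [c]) (by simpa using hc) hq hc'y
    (hyc.trans hc.2) (by grind)

lemma exists_sublist_desNum_eq_one_of_getLast_le_incPair (hw : w.Nodup)
    (hq : (P ++ [x]).IsChain (IncPair w)) (hk : (P ++ [x]).length = lis w) (hc : IncPair w c c')
    (hxc : x ≤ c) : ∃ s, s.Sublist w ∧ desNum s = 1 ∧ s.length = lis w + 2 := by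
  have hc'x : w[c'] < w[x] := getElem_lt_of_getLast_lt hw hq hk (hxc.trans_lt hc.1)
  have hxc : x < c := hxc.lt_of_ne <| by rintro rfl; exact hc'x.not_gt hc.2
  exact exists_sublist_desNum_eq_one_of_two_runs (V := [c']) hq (by simpa using hc) hxc
    (hc.2.trans hc'x) (by grind)

/-- Every entry strictly between `x` and `y` is below `w[x]` or above `w[y]`. According as `c'` is
below, `d` is above, or neither, the pair `(c, c')`, `(d, d')` or `(c', d)` is inserted between
`x` and `y`; in the last case `c'` is above and `d` below. -/
lemma exists_sublist_desNum_eq_one_of_incPairs_in_gap (hw : w.Nodup)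
    (hq : (P ++ x :: y :: S).IsChain (IncPair w)) (hk : (P ++ x :: y :: S).length = lis w)
    (hc : IncPair w c c') (hd : IncPair w d d') (hxc : x ≤ c) (hc'd : c' ≤ d)
    (hd'y : d' ≤ y) :
    ∃ s, s.Sublist w ∧ desNum s = 1 ∧ s.length = lis w + 2 := by
  obtain ⟨hPx, hxy, hyS⟩ := List.isChain_append_cons_cons.1 hq
  have hlen : P.length + S.length + 2 = lis w := by simpa [add_assoc] using hk
  have hx'c : x < c' := hxc.trans_lt hc.1
  have hdy : d < y := hd.1.trans_le hd'y
  rcases getElem_lt_or_gt_of_mem_gap hw hq hk hx'c (hc'd.trans_lt hdy) with hc'x | hyc'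
  · have hxc : x < c := hxc.lt_of_ne <| by rintro rfl; exact hc'x.not_gt hc.2
    exact exists_sublist_desNum_eq_one_of_two_runs (V := c' :: y :: S) hPx
      (.cons_cons hc (.cons_cons ⟨hc'd.trans_lt hdy, hc'x.trans hxy.2⟩ hyS)) hxc
      (hc.2.trans hc'x) (by grind)
  rcases getElem_lt_or_gt_of_mem_gap hw hq hk (hx'c.trans_le hc'd) hdy with hdx | hyd
  · have hc'd : c' < d := hc'd.lt_of_ne <| by rintro rfl; exact hdx.not_gt (hxy.2.trans hyc')
    have hU : (P ++ [x] ++ [c']).IsChain (IncPair w) := by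
      rw [List.append_assoc]
      exact List.isChain_split.2 ⟨hPx, .cons_cons ⟨hx'c, hxy.2.trans hyc'⟩ (.singleton _)⟩
    exact exists_sublist_desNum_eq_one_of_two_runs hU (.cons_cons ⟨hdy, hdx.trans hxy.2⟩ hyS)
      hc'd (hdx.trans (hxy.2.trans hyc')) (by grind)
  · have hd'y : d' < y := hd'y.lt_of_ne <| by rintro rfl; exact hyd.not_gt hd.2
    have hU : (P ++ [x, d] ++ [d']).IsChain (IncPair w) := by
      rw [List.append_assoc]
      exact List.isChain_append_cons_cons.2
        ⟨hPx, ⟨hx'c.trans_le hc'd, hxy.2.trans hyd⟩, .cons_cons hd (.singleton _)⟩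
    exact exists_sublist_desNum_eq_one_of_two_runs hU hyS hd'y (hyd.trans hd.2) (by grind)

end Witnesses

section Counting
variable [LinearOrder α] [Inhabited α] {w : List α}

def ascSet (l : List α) : Finset ℕ :=
  (Finset.Icc 1 (l.length - 1)).filter (fun i => l.getD (i - 1) default < l.getD i default)

lemma ascNum_eq_card_ascSet (l : List α) : ascNum l = (ascSet l).card := rfl

lemma exists_incPair_of_mem_ascSet {i : ℕ} (hi : i ∈ ascSet w) :
    ∃ c c' : Fin w.length, IncPair w c c' ∧ (c : ℕ) + 1 = i ∧ (c' : ℕ) = i := by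
  obtain ⟨hi, h⟩ := Finset.mem_filter.1 hi
  obtain ⟨h1, h2⟩ := Finset.mem_Icc.1 hi
  refine ⟨⟨i - 1, by omega⟩, ⟨i, by omega⟩, ⟨Fin.lt_def.2 (by grind), ?_⟩, by grind,
    rfl⟩
  rwa [List.getD_eq_getElem _ _ (by omega), List.getD_eq_getElem _ _ (by omega)] at h

/-- For an increasing chain `q`, an ascent ending at position `i` lies between the entries
`cutIdx q i - 1` and `cutIdx q i` of `q`. -/
def cutIdx {n : ℕ} (q : List (Fin n)) (i : ℕ) : ℕ :=
  q.findIdx fun p : Fin n => i ≤ (p : ℕ)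

lemma cutIdx_le_length {n : ℕ} (q : List (Fin n)) (i : ℕ) : cutIdx q i ≤ q.length :=
  List.findIdx_le_length

lemma getElem_lt_of_lt_cutIdx {n : ℕ} {q : List (Fin n)} {i j : ℕ} (hj : j < cutIdx q i) :
    (q[j]'(hj.trans_le (cutIdx_le_length q i)) : ℕ) < i := by
  simpa using List.not_of_lt_findIdx hj

lemma le_getElem_of_cutIdx_eq {n : ℕ} {q : List (Fin n)} {i j : ℕ} (hj : cutIdx q i = j)
    (hjq : j < q.length) : i ≤ (q[j] : ℕ) := by
  subst hj
  exact of_decide_eq_true (List.findIdx_getElem (w := hjq))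

lemma lt_of_cutIdx_eq_length {n : ℕ} {q : List (Fin n)} {i : ℕ} (h : cutIdx q i = q.length)
    {p : Fin n} (hp : p ∈ q) : (p : ℕ) < i := by
  simpa using List.findIdx_eq_length.1 h p hp

variable {q : List (Fin w.length)}

lemma cutIdx_mem_Ioo (hw : w.Nodup) (hq : q.IsChain (IncPair w)) (hk : q.length = lis w)
    (hno : ¬ ∃ s, s.Sublist w ∧ desNum s = 1 ∧ s.length = lis w + 2) {i : ℕ}
    (hi : i ∈ ascSet w) : cutIdx q i ∈ Finset.Ioo 0 q.length := by
  obtain ⟨c, c', hc, hci, hc'i⟩ := exists_incPair_of_mem_ascSet hi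
  have hq0 : q ≠ [] := by
    have := one_le_lis (List.ne_nil_of_length_pos c.pos)
    exact List.ne_nil_of_length_pos (by omega)
  refine Finset.mem_Ioo.2 ⟨Nat.pos_of_ne_zero fun h0 => hno ?_,
    (cutIdx_le_length q i).lt_of_ne fun hlast => hno ?_⟩
  · have hy := le_getElem_of_cutIdx_eq h0 (List.length_pos_iff.2 hq0)
    obtain ⟨y, S, rfl⟩ := List.exists_cons_of_ne_nil hq0
    exact exists_sublist_desNum_eq_one_of_incPair_le_head hw hq hk hc
      (Fin.le_def.2 (by grind))
  · obtain ⟨P, x, rfl⟩ : ∃ P x, q = P ++ [x] :=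
      ⟨_, _, (List.dropLast_append_getLast hq0).symm⟩
    have hx := lt_of_cutIdx_eq_length hlast (List.mem_concat_self (xs := P) (a := x))
    exact exists_sublist_desNum_eq_one_of_getLast_le_incPair hw hq hk hc
      (Fin.le_def.2 (by omega))

lemma cutIdx_injOn (hw : w.Nodup) (hq : q.IsChain (IncPair w)) (hk : q.length = lis w)
    (hno : ¬ ∃ s, s.Sublist w ∧ desNum s = 1 ∧ s.length = lis w + 2) :
    Set.InjOn (cutIdx q) (ascSet w) := by
  have key {a b : ℕ} (ha : a ∈ ascSet w) (hb : b ∈ ascSet w) (hab : a < b)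
      (h : cutIdx q a = cutIdx q b) : False := by
    obtain ⟨c, c', hc, hca, hc'a⟩ := exists_incPair_of_mem_ascSet ha
    obtain ⟨d, d', hd, hdb, hd'b⟩ := exists_incPair_of_mem_ascSet hb
    obtain ⟨h0, hlt⟩ := Finset.mem_Ioo.1 (cutIdx_mem_Ioo hw hq hk hno ha)
    obtain ⟨m, hm⟩ : ∃ m, cutIdx q a = m + 1 := ⟨cutIdx q a - 1, by omega⟩
    have hx : (q[m] : ℕ) < a := getElem_lt_of_lt_cutIdx (by omega)
    have hy : b ≤ (q[m + 1] : ℕ) := le_getElem_of_cutIdx_eq (h ▸ hm) (by omega)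
    have hdec : q = q.take m ++ q[m] :: q[m + 1] :: q.drop (m + 2) := by
      conv_lhs => rw [← List.take_append_drop m q, List.drop_eq_getElem_cons (by omega),
        List.drop_eq_getElem_cons (by omega)]
    rw [hdec] at hq hk
    exact hno <| exists_sublist_desNum_eq_one_of_incPairs_in_gap hw hq hk hc hd
      (Fin.le_def.2 (by omega)) (Fin.le_def.2 (by omega)) (Fin.le_def.2 (by omega))
  intro a ha b hb h
  by_contra hne
  rcases lt_or_gt_of_ne hne with hab | hab
  exacts [key ha hb hab h, key hb ha hab h.symm]

theorem exists_sublist_desNum_eq_one_of_lis_le_ascNum (hw : w.Nodup) (hne : w ≠ [])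
    (hasc : lis w ≤ ascNum w) : ∃ s, s.Sublist w ∧ desNum s = 1 ∧ s.length = lis w + 2 := by
  by_contra hno
  obtain ⟨q, hq, hk⟩ := exists_isChain_length_eq_lis w
  have := Finset.card_le_card_of_injOn (cutIdx q) (fun i hi => cutIdx_mem_Ioo hw hq hk hno hi)
    (cutIdx_injOn hw hq hk hno)
  rw [Nat.card_Ioo, ← ascNum_eq_card_ascSet] at this
  have := one_le_lis hne
  omega

end Counting

theorem stmt8 (n : ℕ) (π : Equiv.Perm (Fin n)) (hdes : 1 ≤ desNum (word π))
    (hasc : lis (word π) ≤ ascNum (word π)) :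
    (∃ s : List ℕ, s.Sublist (word π) ∧ desNum s = 1 ∧ s.length = lis (word π) + 2) ∧
      lis (word π) + 2 ≤ lsd (word π) 1 := by
  have hw : (word π).Nodup := List.nodup_ofFn.2 (Fin.val_injective.comp π.injective)
  have hne : word π ≠ [] := by
    intro h
    simp [desNum, desSet, h] at hdes
  obtain ⟨s, hs, hd, hl⟩ := exists_sublist_desNum_eq_one_of_lis_le_ascNum hw hne hasc
  exact ⟨⟨s, hs, hd, hl⟩, hl ▸ hd ▸ length_le_lsd hs⟩
end

section
/- Let π ∈ S_n and i ≥ 1 with ls_{{i}}(π) ≠ 0. Let k be the smallest element of Des(π) such that is(π_{[1,k]}) ≥ i. Then ls_{{i}}(π) = i + is(π_{[k+1,n]}). -/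
/-!
Minimality of `k` yields the key fact: if an increasing subsequence of length `i` ends at
position `q` and a later entry `w_p` is smaller than `w_q`, then `p ≥ k`, because some descent
lies between `q` and `p`. For `≥`, it lets the last entry of an increasing subsequence of length
`i` of `w_{[1,k]}` be replaced by `w_k`; the first entry of a longest increasing subsequence of
`w_{[k+1,n]}` can be replaced by one at most `w_{k+1} < w_k`, and the concatenation has descent
set `{i}`. For `≤`, a subsequence with descent set `{i}` is an increasing run of length `i`
followed by an increasing run starting below its last entry, so the second run lies in
`w_{[k+1,n]}`.
-/

open List Finset

variable {α : Type*}

theorem exists_getElem_eq_of_append_cons_sublist {u v w : List α} {x : α}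
    (h : u ++ x :: v <+ w) :
    ∃ (q : ℕ) (hq : q < w.length), w[q] = x ∧ u <+ w.take q ∧ v <+ w.drop (q + 1) := by
  induction w generalizing u with
  | nil => simp at h
  | cons a w ih =>
    rcases sublist_cons_iff.1 h with h | ⟨r, hr, hrw⟩
    · obtain ⟨q, hq, hwq, hu, hv⟩ := ih h
      exact ⟨q + 1, by simpa using hq, hwq, hu.cons a, hv⟩
    · cases u with
      | nil =>
        obtain ⟨rfl, rfl⟩ := cons.inj hr
        exact ⟨0, by simp, rfl, nil_sublist _, hrw⟩
      | cons b u =>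
        obtain ⟨rfl, rfl⟩ := cons.inj hr
        obtain ⟨q, hq, hwq, hu, hv⟩ := ih hrw
        exact ⟨q + 1, by simpa using hq, hwq, hu.cons_cons b, hv⟩

theorem concat_sublist_take_succ {u w : List α} {q : ℕ} (hu : u <+ w.take q)
    (hq : q < w.length) : u ++ [w[q]] <+ w.take (q + 1) :=
  take_concat_get' w q hq ▸ hu.append (Sublist.refl _)

section LinearOrder

variable [LinearOrder α]

theorem le_lis {s w : List α} (hs : s <+ w) (hsorted : s.Pairwise (· < ·)) :
    s.length ≤ lis w :=
  le_csSup ⟨w.length, by rintro m ⟨t, ht, -, rfl⟩; exact ht.length_le⟩ ⟨s, hs, hsorted, rfl⟩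

theorem exists_sublist_length_eq_lis (w : List α) :
    ∃ s, s <+ w ∧ s.Pairwise (· < ·) ∧ s.length = lis w :=
  Nat.sSup_mem (s := {m | ∃ s : List α, s <+ w ∧ s.Pairwise (· < ·) ∧ s.length = m})
    ⟨0, [], nil_sublist w, Pairwise.nil, rfl⟩
    ⟨w.length, by rintro m ⟨t, ht, -, rfl⟩; exact ht.length_le⟩

theorem lis_mono {w w' : List α} (h : w <+ w') : lis w ≤ lis w' := by
  obtain ⟨s, hs, hsorted, hlen⟩ := exists_sublist_length_eq_lis w
  exact hlen ▸ le_lis (hs.trans h) hsorted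

theorem exists_sublist_length_eq_of_le_lis {w : List α} {m : ℕ} (h : m ≤ lis w) :
    ∃ s, s <+ w ∧ s.Pairwise (· < ·) ∧ s.length = m := by
  obtain ⟨s, hs, hsorted, hlen⟩ := exists_sublist_length_eq_lis w
  refine ⟨s.drop (s.length - m), (drop_sublist _ _).trans hs,
    hsorted.sublist (drop_sublist _ _), ?_⟩
  rw [length_drop]
  omega

theorem exists_cons_sublist_cons_head_le {a y : α} {l t : List α} (h : y :: t <+ a :: l)
    (ht : (y :: t).Pairwise (· < ·)) : ∃ b ≤ a, b :: t <+ a :: l ∧ (b :: t).Pairwise (· < ·) := by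
  rcases le_or_gt y a with hya | hay
  · exact ⟨y, hya, h, ht⟩
  · rw [List.pairwise_cons] at ht
    exact ⟨a, le_rfl, cons_sublist_cons.2 h.of_cons_cons,
      List.pairwise_cons.2 ⟨fun z hz => hay.trans (ht.1 z hz), ht.2⟩⟩

variable [Inhabited α]

theorem mem_desSet_iff {l : List α} {j : ℕ} :
    j ∈ desSet l ↔ ∃ h : j < l.length, 0 < j ∧ l[j] < l[j - 1] := by
  simp only [desSet, Finset.mem_filter, Finset.mem_Icc, getD_eq_getElem?_getD]
  constructor
  · rintro ⟨⟨h1, h2⟩, h3⟩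
    have hj : j < l.length := by omega
    refine ⟨hj, h1, ?_⟩
    simpa [getElem?_pos l j hj, getElem?_pos l (j - 1) (by omega)] using h3
  · rintro ⟨hj, h1, h3⟩
    refine ⟨⟨h1, by omega⟩, ?_⟩
    simpa [getElem?_pos l j hj, getElem?_pos l (j - 1) (by omega)] using h3

theorem getElem_lt_getElem_succ_of_succ_not_mem_desSet {l : List α} (hl : l.Nodup) {j : ℕ}
    (hj : j + 1 < l.length) (hdes : j + 1 ∉ desSet l) : l[j] < l[j + 1] := by
  have hle : l[j] ≤ l[j + 1] := not_lt.1 fun h => hdes (mem_desSet_iff.2 ⟨hj, by omega, h⟩)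
  exact hle.lt_of_ne fun h => by simpa using (hl.getElem_inj_iff).1 h

theorem exists_succ_mem_desSet_of_getElem_lt {w : List α} {q p : ℕ} (hqp : q < p)
    (hp : p < w.length) (hlt : w[p] < w[q]) : ∃ d, q ≤ d ∧ d < p ∧ d + 1 ∈ desSet w := by
  induction p with
  | zero => omega
  | succ p ih =>
    by_cases hdes : w[p + 1] < w[p]
    · exact ⟨p, by omega, by omega, mem_desSet_iff.2 ⟨hp, by omega, hdes⟩⟩
    · have hqp' : q ≠ p := by rintro rfl; exact hdes hlt
      obtain ⟨d, hqd, hdp, hd⟩ := ih (by omega) (by omega) ((not_lt.1 hdes).trans_lt hlt)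
      exact ⟨d, hqd, by omega, hd⟩

theorem desSet_append_cons_cons_s13 {u v : List α} {x y : α} (hux : (u ++ [x]).Pairwise (· < ·))
    (hyv : (y :: v).Pairwise (· < ·)) (hyx : y < x) :
    desSet (u ++ x :: y :: v) = {u.length + 1} := by
  have hsplit : u ++ x :: y :: v = (u ++ [x]) ++ (y :: v) := by simp
  rw [pairwise_iff_getElem] at hux hyv
  ext j
  rw [mem_desSet_iff, Finset.mem_singleton, hsplit]
  constructor
  · rintro ⟨hj, hj0, hlt⟩
    by_contra hne
    have hj' : j < u.length + v.length + 2 := by simp at hj; omega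
    rcases Nat.lt_or_gt_of_ne hne with hlo | hhi
    · rw [getElem_append_left (i := j) (by simp; omega),
        getElem_append_left (i := j - 1) (by simp; omega)] at hlt
      exact lt_asymm hlt (hux _ _ (by simp; omega) (by simp; omega) (by omega))
    · rw [getElem_append_right (i := j) (by simp; omega),
        getElem_append_right (i := j - 1) (by simp; omega)] at hlt
      exact lt_asymm hlt (hyv _ _ (by simp; omega) (by simp; omega) (by simp; omega))
  · rintro rfl
    refine ⟨by simp, by omega, ?_⟩
    simpa using hyx

theorem exists_eq_append_cons_cons_of_desSet_eq_singleton {s : List α} (hs : s.Nodup) {i : ℕ}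
    (h : desSet s = {i}) :
    ∃ u x y v, s = u ++ x :: y :: v ∧ u.length + 1 = i ∧ (u ++ [x]).Pairwise (· < ·) ∧
      (y :: v).Pairwise (· < ·) ∧ y < x := by
  obtain ⟨hi, hi0, hlt⟩ := mem_desSet_iff.1 (h ▸ Finset.mem_singleton_self i)
  obtain ⟨d, rfl⟩ : ∃ d, i = d + 1 := ⟨i - 1, by omega⟩
  have hasc : ∀ j (hj : j + 1 < s.length), j ≠ d → s[j] < s[j + 1] := fun j hj hjd =>
    getElem_lt_getElem_succ_of_succ_not_mem_desSet hs hj (by simpa [h] using hjd)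
  refine ⟨s.take d, s[d], s[d + 1], s.drop (d + 2), ?_, by simp; omega, ?_, ?_, hlt⟩
  · rw [← drop_eq_getElem_cons, ← drop_eq_getElem_cons, take_append_drop]
  · rw [take_concat_get', ← isChain_iff_pairwise, isChain_iff_getElem]
    intro j hj
    simp only [length_take, getElem_take] at hj ⊢
    exact hasc j _ (by omega)
  · rw [← drop_eq_getElem_cons, ← isChain_iff_pairwise, isChain_iff_getElem]
    intro j hj
    simp only [length_drop, getElem_drop] at hj ⊢
    exact hasc (d + 1 + j) (by omega) (by omega)

theorem le_lsD {s w : List α} {D : Finset ℕ} (hs : s <+ w) (hD : desSet s = D) :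
    s.length ≤ lsD w D :=
  le_csSup ⟨w.length, by rintro m ⟨t, ht, -, rfl⟩; exact ht.length_le⟩ ⟨s, hs, hD, rfl⟩

theorem lsD_le {w : List α} {D : Finset ℕ} {m : ℕ}
    (h : ∀ s, s <+ w → desSet s = D → s.length ≤ m) : lsD w D ≤ m :=
  csSup_le' (by rintro _ ⟨s, hs, hD, rfl⟩; exact h s hs hD)

end LinearOrder

section MinimalDescent

variable [LinearOrder α] [Inhabited α] {w : List α} {i k : ℕ}

theorem le_of_getElem_lt_of_minimal_descent
    (hkmin : ∀ k' ∈ desSet w, i ≤ lis (w.take k') → k ≤ k') {q p : ℕ}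
    (hq : i ≤ lis (w.take (q + 1))) (hqp : q < p) (hp : p < w.length) (hlt : w[p] < w[q]) :
    k ≤ p := by
  obtain ⟨d, hqd, hdp, hd⟩ := exists_succ_mem_desSet_of_getElem_lt hqp hp hlt
  have := hkmin (d + 1) hd (hq.trans (lis_mono (take_sublist_take_left (by omega))))
  omega

theorem exists_pairwise_concat_getElem_of_minimal_descent {d : ℕ} (hi : 1 ≤ i)
    (hd : d < w.length) (hki : i ≤ lis (w.take (d + 1)))
    (hkmin : ∀ k' ∈ desSet w, i ≤ lis (w.take k') → d + 1 ≤ k') :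
    ∃ u, u.length + 1 = i ∧ u <+ w.take d ∧ (u ++ [w[d]]).Pairwise (· < ·) := by
  obtain ⟨s, hs, hsorted, hlen⟩ := exists_sublist_length_eq_of_le_lis hki
  obtain ⟨u, x, rfl⟩ : ∃ u x, s = u ++ [x] := by
    rcases s.eq_nil_or_concat with rfl | ⟨u, x, rfl⟩
    · simp at hlen; omega
    · exact ⟨u, x, by simp⟩
  obtain ⟨q, hq, rfl, hu, -⟩ := exists_getElem_eq_of_append_cons_sublist hs
  simp only [length_take, getElem_take, take_take] at hq hu hsorted
  have hqd : q ≤ d := by omega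
  rw [min_eq_left (by omega : q ≤ d + 1)] at hu
  have hlen' : u.length + 1 = i := by simpa using hlen
  have hx : w[q] ≤ w[d] := by
    by_contra! hlt
    have hqd' : q < d := hqd.lt_of_ne (by rintro rfl; exact lt_irrefl _ hlt)
    have hqi : i ≤ lis (w.take (q + 1)) := by
      simpa [hlen'] using le_lis (concat_sublist_take_succ hu (by omega)) hsorted
    have := le_of_getElem_lt_of_minimal_descent hkmin hqi hqd' hd hlt
    omega
  refine ⟨u, hlen', hu.trans (take_sublist_take_left hqd), ?_⟩
  rw [pairwise_append] at hsorted ⊢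
  refine ⟨hsorted.1, pairwise_singleton _ _, fun a ha b hb => ?_⟩
  rw [List.mem_singleton.1 hb]
  exact (hsorted.2.2 a ha _ (List.mem_singleton_self _)).trans_le hx

theorem lsD_singleton_le_of_minimal_descent (hw : w.Nodup)
    (hkmin : ∀ k' ∈ desSet w, i ≤ lis (w.take k') → k ≤ k') :
    lsD w {i} ≤ i + lis (w.drop k) := by
  refine lsD_le fun s hs hD => ?_
  obtain ⟨u, x, y, v, rfl, hlen, hux, hyv, hyx⟩ :=
    exists_eq_append_cons_cons_of_desSet_eq_singleton (hw.sublist hs) hD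
  obtain ⟨p, hp, rfl, huxp, hv⟩ :=
    exists_getElem_eq_of_append_cons_sublist (u := u ++ [x]) (by simpa using hs)
  obtain ⟨q, hq, rfl, hu, -⟩ := exists_getElem_eq_of_append_cons_sublist (v := []) huxp
  simp only [length_take, getElem_take, take_take] at hq hu hux hyx
  rw [min_eq_left (by omega)] at hu
  have hqi : i ≤ lis (w.take (q + 1)) := by
    simpa [hlen] using le_lis (concat_sublist_take_succ hu (by omega)) hux
  have hkp : k ≤ p := le_of_getElem_lt_of_minimal_descent hkmin hqi (by omega) hp hyx
  have hsub : w[p] :: v <+ w.drop k :=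
    (drop_eq_getElem_cons hp ▸ hv.cons_cons _).trans (drop_sublist_drop_left w hkp)
  have := le_lis hsub hyv
  simp only [length_append, length_cons] at this ⊢
  omega

theorem le_lsD_singleton_of_minimal_descent (hi : 1 ≤ i) (hk : k ∈ desSet w)
    (hki : i ≤ lis (w.take k)) (hkmin : ∀ k' ∈ desSet w, i ≤ lis (w.take k') → k ≤ k') :
    i + lis (w.drop k) ≤ lsD w {i} := by
  obtain ⟨hkw, hk0, hdes⟩ := mem_desSet_iff.1 hk
  obtain ⟨d, rfl⟩ : ∃ d, k = d + 1 := ⟨k - 1, by omega⟩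
  obtain ⟨u, hlen, hu, hux⟩ :=
    exists_pairwise_concat_getElem_of_minimal_descent hi (by omega) hki hkmin
  obtain ⟨s, hs, hsorted, hslen⟩ := exists_sublist_length_eq_lis (w.drop (d + 1))
  rw [drop_eq_getElem_cons hkw] at hs hslen ⊢
  obtain ⟨y, t, rfl⟩ : ∃ y t, s = y :: t := by
    have hpos : 1 ≤ lis (w[d + 1] :: w.drop (d + 1 + 1)) :=
      le_lis (s := [w[d + 1]]) (singleton_sublist.2 mem_cons_self) (pairwise_singleton _ _)
    rcases s with _ | ⟨y, t⟩
    · simp at hslen hpos; omega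
    · exact ⟨y, t, rfl⟩
  obtain ⟨b, hb, hbt, hbsorted⟩ := exists_cons_sublist_cons_head_le hs hsorted
  have hdes : desSet (u ++ w[d] :: b :: t) = {i} := by
    rw [desSet_append_cons_cons_s13 hux hbsorted (hb.trans_lt hdes), hlen]
  have hsub : u ++ w[d] :: b :: t <+ w := by
    have := (concat_sublist_take_succ hu (by omega)).append hbt
    rwa [← drop_eq_getElem_cons hkw, take_append_drop, append_assoc] at this
  have := le_lsD hsub hdes
  simp only [length_append, length_cons] at this hslen
  omega

end MinimalDescent

theorem factor_one_eq_take (w : List α) {b : ℕ} (hb : 1 ≤ b) : factor w 1 b = w.take b := by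
  simp [factor, Nat.sub_add_cancel hb]

theorem factor_succ_eq_drop (w : List α) (a : ℕ) {n : ℕ} (hn : w.length ≤ n) :
    factor w (a + 1) n = w.drop a := by
  rw [factor, Nat.add_sub_cancel]
  exact take_of_length_le (by simp only [length_drop]; omega)

theorem stmt13_general (n : ℕ) (π : Equiv.Perm (Fin n)) (i : ℕ) (hi : 1 ≤ i)
    (k : ℕ)
    (hk : k ∈ desSet (word π)) (hki : i ≤ lis (factor (word π) 1 k))
    (hkmin : ∀ k' ∈ desSet (word π), i ≤ lis (factor (word π) 1 k') → k ≤ k') :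
    lsD (word π) {i} = i + lis (factor (word π) (k + 1) n) := by
  have hnodup : (word π).Nodup := nodup_ofFn.2 (Fin.val_injective.comp π.injective)
  have hkmin' : ∀ k' ∈ desSet (word π), i ≤ lis ((word π).take k') → k ≤ k' := by
    intro k' hk' hk'i
    exact hkmin k' hk' (by rwa [factor_one_eq_take _ (mem_desSet_iff.1 hk').2.1])
  rw [factor_one_eq_take _ (mem_desSet_iff.1 hk).2.1] at hki
  rw [factor_succ_eq_drop _ _ (by simp [word])]
  exact le_antisymm (lsD_singleton_le_of_minimal_descent hnodup hkmin')
    (le_lsD_singleton_of_minimal_descent hi hk hki hkmin')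

theorem stmt13 (n : ℕ) (π : Equiv.Perm (Fin n)) (i : ℕ) (hi : 1 ≤ i)
    (h0 : lsD (word π) {i} ≠ 0) (k : ℕ)
    (hk : k ∈ desSet (word π)) (hki : i ≤ lis (factor (word π) 1 k))
    (hkmin : ∀ k' ∈ desSet (word π), i ≤ lis (factor (word π) 1 k') → k ≤ k') :
    lsD (word π) {i} = i + lis (factor (word π) (k + 1) n) :=
  stmt13_general n π i hi k hk hki hkmin
end
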